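/- arXiv:1305.2098 — 4 statements merged into one kernel-verified Lean document; each statement's English description precedes it below -/
import Mathlib

section
/- The elements A_{i,s} (i ∈ {1,2,3}, s ∈ ℤ) of the free abelian group on the variables Y_{j,t} are multiplicatively independent: if a finite product ∏ A_{i,s}^{v_{i,s}} with integer exponents equals the trivial monomial, then all exponents v_{i,s} are zero. -/
/-- Monomials of type `C₃`: finitely supported exponent functions on `{1,2,3} × ℤ`. -/
abbrev Mon : Type := (Fin 3 × ℤ) →₀ ℤ

/-- The generator `Y_{i,s}` (index `i : Fin 3` stands for `i+1 ∈ {1,2,3}`). -/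
noncomputable def Y (i : Fin 3) (s : ℤ) : Mon := Finsupp.single (i, s) 1

/-- The elements `A_{i,s}` of type `C₃` (written additively on exponents). -/
noncomputable def A : Fin 3 → ℤ → Mon
  | 0, s => Y 0 (s + 1) + Y 0 (s - 1) - Y 1 s
  | 1, s => Y 1 (s + 1) + Y 1 (s - 1) - Y 0 s - Y 2 s
  | 2, s => Y 2 (s + 2) + Y 2 (s - 2) - Y 1 (s + 1) - Y 1 (s - 1)

/-- Right-negativity. -/
def RightNegative (u : Mon) : Prop :=
  ∀ (i : Fin 3) (s : ℤ), u (i, s) ≠ 0 → (∀ (j : Fin 3) (t : ℤ), s < t → u (j, t) = 0) →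
    u (i, s) < 0

/-- Dominance: all exponents nonnegative. -/
def Dominant (u : Mon) : Prop := ∀ p : Fin 3 × ℤ, 0 ≤ u p

/-!
Each `A_{j,s}` has a leading monomial `Y_{j,s+d_j}` (with `d = (1,1,2)`) occurring with exponent
`1`, and every other variable of `A_{j,s}` carries a strictly smaller time index. The leading
monomials of distinct `A_{j,s}` are distinct, so in a nontrivial relation the coefficient of the
leading monomial with the largest time index cannot cancel.
-/

section LeadingTerms

variable {ι κ R α : Type*} [Ring R] [NoZeroDivisors R] [LinearOrder α]

theorem linearIndependent_of_leading_terms (f : ι → κ →₀ R) (lead : ι → κ) (height : κ → α)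
    (hlead_inj : Function.Injective lead) (hlead : ∀ i, f i (lead i) ≠ 0)
    (hlower : ∀ i k, f i k ≠ 0 → k = lead i ∨ height k < height (lead i)) :
    LinearIndependent R f := by
  classical
  rw [linearIndependent_iff]
  intro l hl
  by_contra hl0
  obtain ⟨i₀, hi₀, hmax⟩ := l.support.exists_max_image (height ∘ lead)
    (Finsupp.support_nonempty_iff.mpr hl0)
  have hothers : ∀ i ∈ l.support, i ≠ i₀ → f i (lead i₀) = 0 := by
    intro i hi hne
    by_contra hf
    rcases hlower i (lead i₀) hf with heq | hlt
    · exact hne (hlead_inj heq).symm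
    · exact (hmax i hi).not_gt hlt
  have hcoeff : Finsupp.linearCombination R f l (lead i₀) = l i₀ * f i₀ (lead i₀) := by
    rw [Finsupp.linearCombination_apply, Finsupp.sum_apply, Finsupp.sum,
      Finset.sum_eq_single_of_mem i₀ hi₀ fun i hi hne => by simp [hothers i hi hne]]
    rfl
  rw [hl, Finsupp.zero_apply, eq_comm] at hcoeff
  exact mul_ne_zero (Finsupp.mem_support_iff.mp hi₀) (hlead i₀) hcoeff

end LeadingTerms

def leadShift : Fin 3 → ℤ := ![1, 1, 2]

def leadIndex (p : Fin 3 × ℤ) : Fin 3 × ℤ := (p.1, p.2 + leadShift p.1)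

theorem leadIndex_injective : Function.Injective leadIndex := by
  rintro ⟨i, s⟩ ⟨j, t⟩ h
  simp only [leadIndex, Prod.mk.injEq] at h
  obtain ⟨rfl, h⟩ := h
  simpa using h

theorem A_apply_leadIndex (j : Fin 3) (s : ℤ) : A j s (leadIndex (j, s)) = 1 := by
  fin_cases j <;> simp [A, Y, leadIndex, leadShift, Finsupp.single_apply] <;> omega

theorem A_apply_ne_zero (j : Fin 3) (s : ℤ) (k : Fin 3 × ℤ) (hk : A j s k ≠ 0) :
    k = leadIndex (j, s) ∨ k.2 < s + leadShift j := by
  obtain ⟨i, t⟩ := k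
  fin_cases j <;> fin_cases i <;>
    simp [A, Y, leadIndex, leadShift, Finsupp.single_apply] at hk ⊢ <;>
    (try split_ifs at hk) <;> omega

theorem A_linearIndependent : LinearIndependent ℤ fun p : Fin 3 × ℤ => A p.1 p.2 :=
  linearIndependent_of_leading_terms _ leadIndex Prod.snd leadIndex_injective
    (fun p => by simp [A_apply_leadIndex p.1 p.2]) fun p k hk => A_apply_ne_zero p.1 p.2 k hk

/-- The elements `A_{i,s}` are multiplicatively (here: additively) independent:
if a finite integral combination of them is trivial, then all exponents vanish. -/
theorem A_independent (v : (Fin 3 × ℤ) →₀ ℤ)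
    (h : (v.sum fun p c => c • A p.1 p.2) = 0) : v = 0 :=
  linearIndependent_iff.mp A_linearIndependent v (by rwa [Finsupp.linearCombination_apply])
end

section
/- Let Q⁺ be the submonoid of the free abelian group P generated by the elements A_{i,s} (i ∈ {1,2,3}, s ∈ ℤ) and let Q⁻ be the submonoid generated by their inverses. Then Q⁺ ∩ Q⁻ = {1}. -/
/-- `Q⁺`: the submonoid generated by the `A_{i,s}`. -/
noncomputable def Qplus : AddSubmonoid Mon :=
  AddSubmonoid.closure (Set.range fun p : Fin 3 × ℤ => A p.1 p.2)

/-- `Q⁻`: the submonoid generated by the inverses `A_{i,s}^{-1}`. -/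
noncomputable def Qminus : AddSubmonoid Mon :=
  AddSubmonoid.closure (Set.range fun p : Fin 3 × ℤ => -(A p.1 p.2))

theorem AddSubmonoid.eq_zero_or_pos_of_mem_closure {M N : Type*} [AddZeroClass M]
    [AddZeroClass N] [Preorder N] [AddLeftStrictMono N] (f : M →+ N) {S : Set M}
    (hS : ∀ x ∈ S, 0 < f x) {m : M} (hm : m ∈ AddSubmonoid.closure S) :
    m = 0 ∨ 0 < f m := by
  induction hm using AddSubmonoid.closure_induction with
  | mem x hx => exact .inr (hS x hx)
  | zero => exact .inl rfl
  | add x y _ _ hx hy =>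
    rcases hx with rfl | hx
    · simpa using hy
    rcases hy with rfl | hy
    · simpa using Or.inr hx
    exact .inr (by simpa using Left.add_pos hx hy)

noncomputable def weight : Mon →+ ℤ :=
  (Finsupp.linearCombination ℤ fun p : Fin 3 × ℤ => ![3, 5, 6] p.1).toAddMonoidHom

lemma weight_Y (i : Fin 3) (s : ℤ) : weight (Y i s) = ![3, 5, 6] i := by
  simp [weight, Y]

lemma weight_A_pos (i : Fin 3) (s : ℤ) : 0 < weight (A i s) := by
  fin_cases i <;> simp [A, weight_Y]

lemma eq_zero_or_weight_pos_of_mem_Qplus {m : Mon} (hm : m ∈ Qplus) : m = 0 ∨ 0 < weight m :=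
  AddSubmonoid.eq_zero_or_pos_of_mem_closure weight
    (by rintro _ ⟨⟨i, s⟩, rfl⟩; exact weight_A_pos i s) hm

lemma eq_zero_or_weight_neg_of_mem_Qminus {m : Mon} (hm : m ∈ Qminus) :
    m = 0 ∨ weight m < 0 := by
  simpa using AddSubmonoid.eq_zero_or_pos_of_mem_closure (-weight)
    (by rintro _ ⟨⟨i, s⟩, rfl⟩; simpa using weight_A_pos i s) hm

/-- `Q⁺ ∩ Q⁻ = {1}` (written additively: the intersection is trivial). -/
theorem Qplus_inter_Qminus (m : Mon) (h₁ : m ∈ Qplus) (h₂ : m ∈ Qminus) : m = 0 := by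
  rcases eq_zero_or_weight_pos_of_mem_Qplus h₁ with h | hpos
  · exact h
  rcases eq_zero_or_weight_neg_of_mem_Qminus h₂ with h | hneg
  · exact h
  exact (lt_asymm hpos hneg).elim
end

section
/- For integers k ≥ 1, m ≥ 1, and s, the monomial n_m = T_{k,0,m-1}^{(s)} · T_{k-1,0,m}^{(s+4)} · (∏_{j=1}^{m-1} A_{1,s+4k+2m+1-2j}^{-1}) · A_{3,s+4k-2}^{-1} A_{2,s+4k}^{-1} A_{1,s+4k+1}^{-1} is dominant (all exponents nonnegative). -/
/-- The highest `l`-weight `T_{k,ℓ,m}^{(s)} = (∏ 3_{s+4i})(∏ 2_{s+4k+2i+1})(∏ 1_{s+4k+2ℓ+2i+2})`.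
Here `Y 2`, `Y 1`, `Y 0` stand for the variables with node index `3`, `2`, `1`. -/
noncomputable def T (k l m : ℕ) (s : ℤ) : Mon :=
  (∑ i ∈ Finset.range k, Y 2 (s + 4 * i)) +
  (∑ i ∈ Finset.range l, Y 1 (s + 4 * k + 2 * i + 1)) +
  (∑ i ∈ Finset.range m, Y 0 (s + 4 * k + 2 * l + 2 * i + 2))


/-!
Write `k = k' + 1`, `m = m' + 1` and `b = s + 4k'`. Since
`A_{3,b+2} A_{2,b+4} A_{1,b+5} = Y_{3,b} Y_{2,b+1}⁻¹ Y_{1,b+6}`, dividing by these three cancels the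
last `3`-variable of `T_{k,0,m-1}^{(s)}` and one `1`-variable, and the remaining `1`-variables of the
two `T`'s are exactly those of `∏_{i<m'} A_{1,b+7+2i}`. What is left is a monomial without inverses:
`n_m = (∏_{i<k'} Y_{3,s+4i} Y_{3,s+4+4i}) · Y_{2,b+1} · ∏_{i<m'} Y_{2,b+7+2i}`.
-/

lemma Finset.sum_Icc_one_sub_two_mul {M : Type*} [AddCommMonoid M] (f : ℤ → M) (c : ℤ) (n : ℕ) :
    ∑ j ∈ Icc 1 n, f (c - 2 * j) = ∑ i ∈ range n, f (c - 2 * n + 2 * i) := by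
  rw [← Ico_add_one_right_eq_Icc, sum_Ico_eq_sum_range, ← sum_range_reflect]
  refine sum_congr rfl fun i hi => ?_
  have hi : i < n := mem_range.mp hi
  push_cast [Nat.sub_sub, Nat.cast_sub (by omega : 1 + i ≤ n)]
  ring_nf

lemma dominant_iff_nonneg (u : Mon) : Dominant u ↔ 0 ≤ u := by
  simp only [Dominant, Finsupp.le_def, Finsupp.coe_zero, Pi.zero_apply]

lemma Y_nonneg (i : Fin 3) (t : ℤ) : 0 ≤ Y i t :=
  Finsupp.single_nonneg.2 zero_le_one

noncomputable def nMonomial (k m : ℕ) (s : ℤ) : Mon :=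
  T k 0 (m - 1) s + T (k - 1) 0 m (s + 4)
    - (∑ j ∈ Finset.Icc 1 (m - 1), A 0 (s + 4 * k + 2 * m + 1 - 2 * j))
    - A 2 (s + 4 * k - 2) - A 1 (s + 4 * k) - A 0 (s + 4 * k + 1)

open Finset in
lemma nMonomial_succ_succ (k m : ℕ) (s : ℤ) :
    nMonomial (k + 1) (m + 1) s
      = (∑ i ∈ range k, Y 2 (s + 4 * i)) + (∑ i ∈ range k, Y 2 (s + 4 + 4 * i))
        + Y 1 (s + 4 * k + 1) + ∑ i ∈ range m, Y 1 (s + 4 * k + 7 + 2 * i) := by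
  simp only [nMonomial, Nat.add_sub_cancel, sum_Icc_one_sub_two_mul]
  simp only [T, A, range_zero, sum_empty, sum_sub_distrib, sum_add_distrib]
  rw [sum_range_succ _ k, sum_range_succ' _ m]
  push_cast
  -- normalising the indices makes equal `Y`-terms syntactically equal, so that `abel` cancels them
  ring_nf
  abel

/-- The monomial
`n_m = T_{k,0,m-1}^{(s)} T_{k-1,0,m}^{(s+4)} (∏_{j=1}^{m-1} A_{1,s+4k+2m+1-2j}^{-1})
       A_{3,s+4k-2}^{-1} A_{2,s+4k}^{-1} A_{1,s+4k+1}^{-1}` is dominant. -/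
theorem n_m_dominant (k m : ℕ) (hk : 1 ≤ k) (hm : 1 ≤ m) (s : ℤ) :
    Dominant (T k 0 (m - 1) s + T (k - 1) 0 m (s + 4)
      - (∑ j ∈ Finset.Icc 1 (m - 1), A 0 (s + 4 * k + 2 * m + 1 - 2 * j))
      - A 2 (s + 4 * k - 2) - A 1 (s + 4 * k) - A 0 (s + 4 * k + 1)) := by
  obtain ⟨k, rfl⟩ := Nat.exists_eq_add_of_le' hk
  obtain ⟨m, rfl⟩ := Nat.exists_eq_add_of_le' hm
  show Dominant (nMonomial (k + 1) (m + 1) s)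
  rw [dominant_iff_nonneg, nMonomial_succ_succ]
  have hsum : ∀ (n : ℕ) (i : Fin 3) (t : ℕ → ℤ), 0 ≤ ∑ x ∈ Finset.range n, Y i (t x) :=
    fun _ i t => Finset.sum_nonneg fun x _ => Y_nonneg i (t x)
  exact add_nonneg (add_nonneg (add_nonneg (hsum _ _ _) (hsum _ _ _)) (Y_nonneg _ _)) (hsum _ _ _)
end

section
/- Any finite product of monomials each of which is either right-negative or equal to the trivial monomial is again right-negative or trivial; moreover if m is right-negative and m' = m · ∏ A_{i_r,s_r}^{-1} is obtained from m by multiplying by finitely many inverses A_{i,s}^{-1} of the type C₃ elements, then m' is right-negative. -/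
/-
For a monomial with finite support, right-negativity says that at the highest level where it has
a nonzero exponent, all its exponents are nonpositive. If `u` and `v` are right-negative and `u + v`
vanishes above level `s`, then walking down from a level above both supports, at each level `t > s`
the exponents of `u` and `v` are nonpositive and sum to zero, hence vanish; so `u` and `v` vanish
above `s` too, and the exponents of `u + v` at level `s` are sums of nonpositive ones. Thus
right-negative monomials form an additive submonoid, which contains each `-A i s` since the top
exponent of `A_{i,s}^{-1}` is `-1` and its positive exponents sit strictly lower.
-/

def VanishesAbove (u : Mon) (s : ℤ) : Prop := ∀ (j : Fin 3) (t : ℤ), s < t → u (j, t) = 0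

lemma VanishesAbove.mono {u : Mon} {s s' : ℤ} (hu : VanishesAbove u s) (hss' : s ≤ s') :
    VanishesAbove u s' :=
  fun j t ht => hu j t (hss'.trans_lt ht)

lemma exists_vanishesAbove (u : Mon) : ∃ s, VanishesAbove u s := by
  obtain ⟨s, hs⟩ := (u.support.image Prod.snd).exists_le
  refine ⟨s, fun j t hst => ?_⟩
  by_contra hne
  have := hs t (Finset.mem_image_of_mem Prod.snd (Finsupp.mem_support_iff.mpr hne))
  omega

lemma rightNegative_iff {u : Mon} :
    RightNegative u ↔ ∀ (i : Fin 3) (s : ℤ), VanishesAbove u s → u (i, s) ≤ 0 := by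
  refine ⟨fun hu i s hs => ?_, fun hu i s hne hs => lt_of_le_of_ne (hu i s hs) hne⟩
  by_cases hne : u (i, s) = 0
  · exact hne.le
  · exact (hu i s hne hs).le

lemma rightNegative_of_nonpos_from {u : Mon} {i₀ : Fin 3} {s₀ : ℤ} (hne : u (i₀, s₀) ≠ 0)
    (hnonpos : ∀ (j : Fin 3) (t : ℤ), s₀ ≤ t → u (j, t) ≤ 0) : RightNegative u := by
  refine rightNegative_iff.mpr fun i s hs => hnonpos i s ?_
  by_contra! hlt
  exact hne (hs i₀ s₀ hlt)

lemma VanishesAbove.of_succ {u : Mon} {n : ℤ} (hu : VanishesAbove u (n + 1))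
    (hlevel : ∀ j : Fin 3, u (j, n + 1) = 0) : VanishesAbove u n := by
  intro j t hnt
  rcases eq_or_lt_of_le (Int.add_one_le_iff.mpr hnt) with rfl | hlt
  exacts [hlevel j, hu j t hlt]

lemma RightNegative.vanishesAbove_of_add {u v : Mon} (hu : RightNegative u)
    (hv : RightNegative v) {s : ℤ} (huv : VanishesAbove (u + v) s) :
    VanishesAbove u s ∧ VanishesAbove v s := by
  have descend : ∀ n, s ≤ n → VanishesAbove u n ∧ VanishesAbove v n →
      VanishesAbove u s ∧ VanishesAbove v s := by
    intro n hsn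
    induction n, hsn using Int.leInduction with
    | base => exact id
    | succ n hsn ih =>
      rintro ⟨hun, hvn⟩
      have hlevel : ∀ j, u (j, n + 1) = 0 ∧ v (j, n + 1) = 0 := fun j => by
        have hsum : u (j, n + 1) + v (j, n + 1) = 0 := huv j (n + 1) (by omega)
        have := rightNegative_iff.mp hu j _ hun
        have := rightNegative_iff.mp hv j _ hvn
        omega
      exact ih ⟨hun.of_succ fun j => (hlevel j).1, hvn.of_succ fun j => (hlevel j).2⟩
  obtain ⟨Nu, hNu⟩ := exists_vanishesAbove u
  obtain ⟨Nv, hNv⟩ := exists_vanishesAbove v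
  exact descend (max s (max Nu Nv)) (le_max_left _ _)
    ⟨hNu.mono (by omega), hNv.mono (by omega)⟩

lemma RightNegative.add {u v : Mon} (hu : RightNegative u) (hv : RightNegative v) :
    RightNegative (u + v) := by
  refine rightNegative_iff.mpr fun i s huv => ?_
  obtain ⟨hus, hvs⟩ := hu.vanishesAbove_of_add hv huv
  rw [Finsupp.add_apply]
  exact add_nonpos (rightNegative_iff.mp hu i s hus) (rightNegative_iff.mp hv i s hvs)

def rightNegativeAddSubmonoid : AddSubmonoid Mon where
  carrier := {u | RightNegative u}
  zero_mem' := fun _ _ hne _ => absurd rfl hne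
  add_mem' := RightNegative.add

lemma rightNegative_neg_A (i : Fin 3) (s : ℤ) : RightNegative (-A i s) := by
  refine rightNegative_of_nonpos_from (i₀ := i) (s₀ := s + if i = 2 then 2 else 1) ?_
    fun j t => ?_ <;> fin_cases i <;> try fin_cases j
  all_goals simp [A, Y, Finsupp.single_apply] <;> split_ifs <;> omega

/-- A finite product of monomials each right-negative or trivial is right-negative or
trivial; and multiplying a right-negative monomial by finitely many `A_{i,s}^{-1}`
yields a right-negative monomial. -/
theorem rightNegative_products :
    (∀ L : List Mon, (∀ u ∈ L, RightNegative u ∨ u = 0) →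
      RightNegative L.sum ∨ L.sum = 0) ∧
    (∀ m : Mon, RightNegative m → ∀ L : List (Fin 3 × ℤ),
      RightNegative (m - (L.map fun p => A p.1 p.2).sum)) := by
  refine ⟨fun L hL => Or.inl ?_, fun m hm L => ?_⟩
  · refine rightNegativeAddSubmonoid.list_sum_mem fun u hu => ?_
    rcases hL u hu with hu | rfl
    exacts [hu, rightNegativeAddSubmonoid.zero_mem]
  · rw [sub_eq_add_neg, List.sum_neg, List.map_map]
    refine rightNegativeAddSubmonoid.add_mem hm
      (rightNegativeAddSubmonoid.list_sum_mem fun u hu => ?_)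
    obtain ⟨p, -, rfl⟩ := List.mem_map.mp hu
    exact rightNegative_neg_A p.1 p.2
end
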